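/- Let g be the symplectic or orthogonal Lie algebra as above, and let V be a highest weight g-module with highest weight λ = (λ_1,…,λ_n) and highest weight vector w. Then for every r ≥ 0, the vector (F^r)_{nn}·w − (−λ_1)^{r}·w lies in the sum of the weight spaces V_μ over weights μ ≠ λ. (This is the module-theoretic form of the relative Harish–Chandra projection formula pr_n T_{nn}(u) = 1/(u+λ_1).) -/

import Mathlib

noncomputable section
open scoped Classical
attribute [local instance] LieRing.ofAssociativeRing

/-! ### The symplectic / orthogonal Lie algebra `g ⊆ gl_N`.

`N = 2n` (even case, `oc = false`) or `N = 2n + 1` (odd case, `oc = true`), with index set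
`I = {−n,…,−1,1,…,n}` resp. `I = {−n,…,n}`.  The Boolean `symp` distinguishes the symplectic
case (`symp = true`, only allowed for `N = 2n`) from the orthogonal case (`symp = false`). -/

/-- The index set `I`: integers `i` with `−n ≤ i ≤ n`, excluding `0` in the even case. -/
def Idx (n : ℕ) (oc : Bool) : Finset ℤ :=
  (Finset.Icc (-(n : ℤ)) (n : ℤ)).filter fun i => i ≠ 0 ∨ oc = true

abbrev IdxT (n : ℕ) (oc : Bool) := {i : ℤ // i ∈ Idx n oc}

/-- Negation `i ↦ −i` on the index set. -/
def negI {n : ℕ} {oc : Bool} (i : IdxT n oc) : IdxT n oc :=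
  ⟨-i.1, by
    have h := i.2
    simp only [Idx, Finset.mem_filter, Finset.mem_Icc] at h ⊢
    refine ⟨⟨by omega, by omega⟩, ?_⟩
    rcases h.2 with h' | h'
    · left; omega
    · right; exact h'⟩

/-- The sign of a (nonzero) index, as a complex number. -/
def sgnC (i : ℤ) : ℂ := if 0 < i then 1 else -1

/-- `θ_{ij} = 1` in the orthogonal case, `θ_{ij} = sgn(i) sgn(j)` in the symplectic case. -/
def theta (symp : Bool) (i j : ℤ) : ℂ := if symp then sgnC i * sgnC j else 1

/-- The generator `F_{ij} = E_{ij} − θ_{ij} E_{−j,−i}` as an `N × N` complex matrix. -/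
def FmatC (n : ℕ) (oc symp : Bool) (i j : IdxT n oc) : Matrix (IdxT n oc) (IdxT n oc) ℂ :=
  Matrix.single i j 1 - theta symp i.1 j.1 • Matrix.single (negI j) (negI i) 1

/-- The classical Lie algebra `g ⊆ gl_N` spanned by the `F_{ij}` (the Lie subalgebra they
generate; it coincides with their linear span since the span is closed under brackets). -/
abbrev gLie (n : ℕ) (oc symp : Bool) : LieSubalgebra ℂ (Matrix (IdxT n oc) (IdxT n oc) ℂ) :=
  LieSubalgebra.lieSpan ℂ _ {A | ∃ i j, A = FmatC n oc symp i j}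

/-- `F_{ij}` as an element of `g`. -/
def Fg (n : ℕ) (oc symp : Bool) (i j : IdxT n oc) : gLie n oc symp :=
  ⟨FmatC n oc symp i j, LieSubalgebra.subset_lieSpan ⟨i, j, rfl⟩⟩

/-- The universal enveloping algebra `U(g)`. -/
abbrev Ug (n : ℕ) (oc symp : Bool) := UniversalEnvelopingAlgebra ℂ (gLie n oc symp)

/-- The `N × N` matrix `F` over `U(g)` whose `(i,j)` entry is `ι(F_{ij})`. -/
def Fu (n : ℕ) (oc symp : Bool) : Matrix (IdxT n oc) (IdxT n oc) (Ug n oc symp) :=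
  fun i j => UniversalEnvelopingAlgebra.ι ℂ (Fg n oc symp i j)

/-! ### Highest weight `g`-modules. -/

/-- The index `i − n − 1` (for 1-based `i`): the Cartan generators are
`H_1 = F_{−n,−n}, …, H_n = F_{−1,−1}`; with 0-based `i : Fin n` the index is `i − n`. -/
def cartanIdx (n : ℕ) (oc : Bool) (i : Fin n) : IdxT n oc :=
  ⟨(i : ℤ) - n, by
    have hi : ((i : ℕ) : ℤ) < n := by exact_mod_cast i.2
    simp only [Idx, Finset.mem_filter, Finset.mem_Icc]
    exact ⟨⟨by omega, by omega⟩, Or.inl (by omega)⟩⟩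

variable {V : Type} [AddCommGroup V] [Module ℂ V]

/-- `V` is a highest weight `g`-module with highest weight `lam` and highest weight
vector `w`: `V` is generated by `w ≠ 0`, `F_{ij}·w = 0` for `i < j`, and `H_i·w = λ_i w`. -/
structure IsHWg (n : ℕ) (oc symp : Bool) (ρ : gLie n oc symp →ₗ⁅ℂ⁆ Module.End ℂ V)
    (lam : Fin n → ℂ) (w : V) : Prop where
  w_ne : w ≠ 0
  gen : ∀ v : V, ∃ u : Ug n oc symp, (UniversalEnvelopingAlgebra.lift ℂ ρ u) w = v
  upper : ∀ i j : IdxT n oc, i.1 < j.1 → ρ (Fg n oc symp i j) w = 0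
  diag : ∀ i : Fin n, ρ (Fg n oc symp (cartanIdx n oc i) (cartanIdx n oc i)) w = lam i • w

/-- The weight space `V_μ = {m ∈ V : H_i·m = μ_i m for all i}`. -/
def wtSpg (n : ℕ) (oc symp : Bool) (ρ : gLie n oc symp →ₗ⁅ℂ⁆ Module.End ℂ V)
    (μ : Fin n → ℂ) : Submodule ℂ V :=
  ⨅ i : Fin n,
    Module.End.eigenspace (ρ (Fg n oc symp (cartanIdx n oc i) (cartanIdx n oc i))) (μ i)

/-- The index `n ∈ I`. -/
def posN (n : ℕ) (oc : Bool) (hn : 1 ≤ n) : IdxT n oc :=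
  ⟨(n : ℤ), by
    simp only [Idx, Finset.mem_filter, Finset.mem_Icc]
    exact ⟨⟨by omega, by omega⟩, Or.inl (by omega)⟩⟩

/-! The column of `F` through the index `n` kills `w` off the diagonal, since `k < n` for every
other index `k`, and its diagonal entry `F_{nn} = −F_{−n,−n} = −H_1` acts on `w` by `−λ_1`.
Hence in `(F^r)_{nn} = ∑_k (F^{r−1})_{nk} F_{kn}` only `k = n` survives on `w`, and
`(F^r)_{nn}·w = (−λ_1)^r·w` exactly. -/

theorem Matrix.pow_apply_self_apply_of_col_apply {ι R M : Type*} [Fintype ι] [DecidableEq ι]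
    [CommSemiring R] [AddCommMonoid M] [Module R M] (X : Matrix ι ι (Module.End R M)) (p : ι)
    (w : M) (c : R) (hoff : ∀ k ≠ p, X k p w = 0) (hdiag : X p p w = c • w) (r : ℕ) :
    (X ^ r) p p w = c ^ r • w := by
  induction r with
  | zero => simp [Matrix.one_apply_eq]
  | succ r ih =>
    rw [pow_succ, Matrix.mul_apply, LinearMap.sum_apply, Finset.sum_eq_single p]
    · rw [Module.End.mul_apply, hdiag, map_smul, ih, smul_smul, pow_succ']
    · intro k _ hk
      rw [Module.End.mul_apply, hoff k hk, map_zero]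
    · simp

theorem negI_posN (n : ℕ) (oc : Bool) (hn : 1 ≤ n) :
    negI (posN n oc hn) = cartanIdx n oc ⟨0, hn⟩ :=
  Subtype.ext (by simp [negI, posN, cartanIdx])

theorem negI_cartanIdx_zero (n : ℕ) (oc : Bool) (hn : 1 ≤ n) :
    negI (cartanIdx n oc ⟨0, hn⟩) = posN n oc hn :=
  Subtype.ext (by simp [negI, posN, cartanIdx])

theorem theta_self (symp : Bool) (i : ℤ) : theta symp i i = 1 := by
  cases symp <;> simp only [theta, sgnC] <;> split_ifs <;> norm_num

theorem Fg_posN_posN (n : ℕ) (hn : 1 ≤ n) (oc symp : Bool) :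
    Fg n oc symp (posN n oc hn) (posN n oc hn)
      = -Fg n oc symp (cartanIdx n oc ⟨0, hn⟩) (cartanIdx n oc ⟨0, hn⟩) := by
  apply Subtype.ext
  show FmatC n oc symp _ _ = -FmatC n oc symp _ _
  rw [FmatC, FmatC, theta_self, theta_self, negI_posN, negI_cartanIdx_zero, one_smul, one_smul]
  abel

theorem lt_of_ne_posN {n : ℕ} {oc : Bool} {hn : 1 ≤ n} {k : IdxT n oc}
    (hk : k ≠ posN n oc hn) : k.1 < n := by
  have hk' : k.1 ≠ n := fun h => hk (Subtype.ext h)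
  have hmem := k.2
  simp only [Idx, Finset.mem_filter, Finset.mem_Icc] at hmem
  omega

theorem IsHWg.lift_Fu_pow_posN_posN_apply {n : ℕ} (hn : 1 ≤ n) {oc symp : Bool}
    {ρ : gLie n oc symp →ₗ⁅ℂ⁆ Module.End ℂ V} {lam : Fin n → ℂ} {w : V}
    (hhw : IsHWg n oc symp ρ lam w) (r : ℕ) :
    UniversalEnvelopingAlgebra.lift ℂ ρ ((Fu n oc symp ^ r) (posN n oc hn) (posN n oc hn)) w
      = (-lam ⟨0, hn⟩) ^ r • w := by
  rw [← Matrix.map_apply (f := UniversalEnvelopingAlgebra.lift ℂ ρ), ← AlgHom.mapMatrix_apply,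
    map_pow]
  refine Matrix.pow_apply_self_apply_of_col_apply _ _ _ _ (fun k hk => ?_) ?_ r
  · show UniversalEnvelopingAlgebra.lift ℂ ρ (UniversalEnvelopingAlgebra.ι ℂ _) w = 0
    rw [UniversalEnvelopingAlgebra.lift_ι_apply]
    exact hhw.upper _ _ (lt_of_ne_posN hk)
  · show UniversalEnvelopingAlgebra.lift ℂ ρ (UniversalEnvelopingAlgebra.ι ℂ _) w = _
    rw [UniversalEnvelopingAlgebra.lift_ι_apply, Fg_posN_posN, map_neg, LinearMap.neg_apply,
      hhw.diag, neg_smul]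

theorem stmt_6_general (n : ℕ) (hn : 1 ≤ n) (oc symp : Bool)
    (ρ : gLie n oc symp →ₗ⁅ℂ⁆ Module.End ℂ V) (lam : Fin n → ℂ) (w : V)
    (hhw : IsHWg n oc symp ρ lam w) (r : ℕ) :
    (UniversalEnvelopingAlgebra.lift ℂ ρ
        ((Fu n oc symp ^ r) (posN n oc hn) (posN n oc hn))) w
      - (-(lam ⟨0, hn⟩)) ^ r • w ∈
      ⨆ (μ : Fin n → ℂ) (_ : μ ≠ lam), wtSpg n oc symp ρ μ := by
  rw [hhw.lift_Fu_pow_posN_posN_apply hn r, sub_self]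
  exact zero_mem _

/-- If `V` is a highest weight `g`-module with highest weight `λ` and highest
weight vector `w`, then for every `r ≥ 0` the vector `(F^r)_{nn}·w − (−λ_1)^r·w` lies in the
sum of the weight spaces `V_μ` over weights `μ ≠ λ`. -/
theorem stmt_6 (n : ℕ) (hn : 1 ≤ n) (oc symp : Bool) (hcase : ¬(oc = true ∧ symp = true))
    (ρ : gLie n oc symp →ₗ⁅ℂ⁆ Module.End ℂ V) (lam : Fin n → ℂ) (w : V)
    (hhw : IsHWg n oc symp ρ lam w) (r : ℕ) :
    (UniversalEnvelopingAlgebra.lift ℂ ρ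
        ((Fu n oc symp ^ r) (posN n oc hn) (posN n oc hn))) w
      - (-(lam ⟨0, hn⟩)) ^ r • w ∈
      ⨆ (μ : Fin n → ℂ) (_ : μ ≠ lam), wtSpg n oc symp ρ μ :=
  stmt_6_general n hn oc symp ρ lam w hhw r
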